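/- Let G be a finite graph on n vertices and let C be the structure on domain V(G) ∪ {⋆, c⊥} with binary cost f(x,y) = −∞ if x,y ∈ V(G) and xy ∉ E(G) or x = y = ⋆; f(⋆, y) = 1 for y ∈ V(G); and f = 0 otherwise. Then the maximum, over all maps h : [n+1] → V(G) ∪ {⋆, c⊥} that assign finite total value to the complete graph instance K_{n+1} (with all ordered pairs of distinct vertices as unit-weight constraints), of the total value equals the maximum clique size of G. -/

import Mathlib

/-- The domain `V(G) ∪ {⋆, c⊥}`: `Sum.inl v` is a vertex, `Sum.inr true = ⋆`,
`Sum.inr false = c⊥`. -/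
abbrev MCDom (n : ℕ) := Sum (Fin n) Bool

/-- The Max-Sol cost function encoding Maximum Clique. -/
noncomputable def mcCost (n : ℕ) (G : SimpleGraph (Fin n)) [DecidableRel G.Adj] :
    MCDom n → MCDom n → EReal
  | Sum.inl a, Sum.inl b => if ¬ G.Adj a b then ⊥ else 0
  | Sum.inr true, Sum.inr true => ⊥
  | Sum.inr true, Sum.inl _ => 1
  | _, _ => 0

/-- The value of an assignment `h` on the complete instance `K_{n+1}`:
the sum over all ordered pairs of distinct vertices. -/
noncomputable def mcVal (n : ℕ) (G : SimpleGraph (Fin n)) [DecidableRel G.Adj]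
    (h : Fin (n + 1) → MCDom n) : EReal :=
  ∑ u : Fin (n + 1), ∑ v : Fin (n + 1),
    if u ≠ v then mcCost n G (h u) (h v) else 0

/-!
On a feasible assignment each ordered pair `(⋆, vertex)` contributes `1` and every other pair
contributes `0`, so the value is `#⋆ · #vertices`. Two positions cannot both be `⋆`, and the
positions carrying vertices carry pairwise distinct, pairwise adjacent vertices, so the value is
at most `1 · ω(G)`. Placing `⋆` at position `0`, a maximum clique at the next positions and `c⊥`
everywhere else attains `ω(G)`.
-/

open Finset

def MCFeasible (n : ℕ) (G : SimpleGraph (Fin n)) [DecidableRel G.Adj]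
    (h : Fin (n + 1) → MCDom n) : Prop :=
  ∀ u v, u ≠ v → mcCost n G (h u) (h v) ≠ ⊥

section

variable {n : ℕ} {G : SimpleGraph (Fin n)} [DecidableRel G.Adj]

def starIndicator (x : MCDom n) : ℕ := if x = Sum.inr true then 1 else 0

def vertexIndicator (x : MCDom n) : ℕ := if x.isLeft then 1 else 0

lemma starIndicator_mul_vertexIndicator_self (x : MCDom n) :
    starIndicator x * vertexIndicator x = 0 := by
  rcases x with a | (_ | _) <;> simp [starIndicator, vertexIndicator]

lemma mcCost_eq_of_ne_bot {x y : MCDom n} (h : mcCost n G x y ≠ ⊥) :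
    mcCost n G x y = (starIndicator x * vertexIndicator y : ℕ) := by
  rcases x with a | (_ | _) <;> rcases y with b | (_ | _) <;>
    simp_all [mcCost, starIndicator, vertexIndicator]

lemma mcVal_eq_bot_of_not_feasible {h : Fin (n + 1) → MCDom n} (hh : ¬ MCFeasible n G h) :
    mcVal n G h = ⊥ := by
  obtain ⟨u, v, huv, hbot⟩ : ∃ u v, u ≠ v ∧ mcCost n G (h u) (h v) = ⊥ := by
    simpa [MCFeasible] using hh
  exact WithBot.sum_eq_bot_iff.2 ⟨u, mem_univ u, WithBot.sum_eq_bot_iff.2 ⟨v, mem_univ v, by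
    rw [if_pos huv]; exact hbot⟩⟩

lemma mcVal_eq_of_feasible {h : Fin (n + 1) → MCDom n} (hh : MCFeasible n G h) :
    mcVal n G h = (#{u | h u = Sum.inr true} * #{u | (h u).isLeft} : ℕ) := by
  have hterm : ∀ u v, (if u ≠ v then mcCost n G (h u) (h v) else 0) =
      (starIndicator (h u) * vertexIndicator (h v) : ℕ) := by
    intro u v
    by_cases huv : u = v
    · simp [huv, starIndicator_mul_vertexIndicator_self]
    · rw [if_pos huv, mcCost_eq_of_ne_bot (hh u v huv)]
  simp only [mcVal, hterm, ← Nat.cast_sum, ← sum_mul_sum, starIndicator, vertexIndicator,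
    sum_boole, Nat.cast_id]

lemma card_star_le_one_of_feasible {h : Fin (n + 1) → MCDom n} (hh : MCFeasible n G h) :
    #{u | h u = Sum.inr true} ≤ 1 := by
  refine card_le_one.2 fun u hu v hv => by_contra fun huv => hh u v huv ?_
  rw [(mem_filter.1 hu).2, (mem_filter.1 hv).2]
  rfl

lemma card_vertex_le_cliqueNum_of_feasible {h : Fin (n + 1) → MCDom n}
    (hh : MCFeasible n G h) : #{u | (h u).isLeft} ≤ G.cliqueNum := by
  set K : Finset (Fin n) := {a | ∃ u, h u = Sum.inl a}
  have hadj : ∀ u v a b, u ≠ v → h u = Sum.inl a → h v = Sum.inl b → G.Adj a b := by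
    intro u v a b huv ha hb
    by_contra hab
    exact hh u v huv (by simp [ha, hb, mcCost, hab])
  have hK : G.IsClique (K : Set (Fin n)) := by
    intro a ha b hb _
    obtain ⟨u, hu⟩ := (mem_filter.1 ha).2
    obtain ⟨v, hv⟩ := (mem_filter.1 hb).2
    exact hadj u v a b (by rintro rfl; simp_all) hu hv
  calc #{u | (h u).isLeft}
      ≤ #(K.map Function.Embedding.inl) := by
        refine card_le_card_of_injOn h (fun u hu => ?_) fun u hu v hv huv => ?_
        · obtain ⟨a, ha⟩ := Sum.isLeft_iff.1 (mem_filter.1 hu).2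
          simpa [K, ha] using ⟨u, ha⟩
        · obtain ⟨a, ha⟩ := Sum.isLeft_iff.1 (mem_filter.1 hu).2
          by_contra hne
          -- two positions carrying the same vertex `a` would need `G.Adj a a`
          exact (hadj u v a a hne ha (huv ▸ ha)).ne rfl
    _ = #K := card_map _
    _ ≤ G.cliqueNum := hK.card_le_cliqueNum

lemma mcVal_le_cliqueNum (h : Fin (n + 1) → MCDom n) : mcVal n G h ≤ G.cliqueNum := by
  by_cases hh : MCFeasible n G h
  · rw [mcVal_eq_of_feasible hh]
    exact_mod_cast (Nat.mul_le_mul (card_star_le_one_of_feasible hh)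
      (card_vertex_le_cliqueNum_of_feasible hh)).trans_eq (one_mul _)
  · rw [mcVal_eq_bot_of_not_feasible hh]
    exact bot_le

def cliqueAssignment (t : Finset (Fin n)) : Fin (n + 1) → MCDom n :=
  Fin.cases (Sum.inr true) fun i => if i ∈ t then Sum.inl i else Sum.inr false

lemma feasible_cliqueAssignment {t : Finset (Fin n)} (ht : G.IsClique (t : Set (Fin n))) :
    MCFeasible n G (cliqueAssignment t) := by
  intro u v huv
  induction u using Fin.cases <;> induction v using Fin.cases
  case zero.zero => exact absurd rfl huv
  case succ.succ i j =>
    have hij : i ≠ j := fun hij => huv (congrArg Fin.succ hij)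
    simp only [cliqueAssignment, Fin.cases_succ]
    split_ifs with hi hj
    · simp [mcCost, ht hi hj hij]
    all_goals simp [mcCost]
  all_goals
    simp only [cliqueAssignment, Fin.cases_zero, Fin.cases_succ]
    split_ifs <;> simp [mcCost, ← EReal.coe_one]

lemma mcVal_cliqueAssignment {t : Finset (Fin n)} (ht : G.IsClique (t : Set (Fin n))) :
    mcVal n G (cliqueAssignment t) = #t := by
  have hstar : #{u | cliqueAssignment t u = Sum.inr true} = 1 := by
    rw [Fin.card_filter_univ_succ]
    simp [cliqueAssignment, ite_eq_iff]
  have hvertex : #{u | (cliqueAssignment t u).isLeft} = #t := by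
    rw [Fin.card_filter_univ_succ]
    simp [cliqueAssignment, apply_ite]
  rw [mcVal_eq_of_feasible (feasible_cliqueAssignment ht), hstar, hvertex, one_mul]

end

/-- The maximum value of the clique-encoding VCSP instance on `K_{n+1}`
equals the maximum clique size of `G`. -/
theorem stmt_10 (n : ℕ) (G : SimpleGraph (Fin n)) [DecidableRel G.Adj] :
    (∀ h : Fin (n + 1) → MCDom n, mcVal n G h ≤ (G.cliqueNum : EReal)) ∧
    (∃ h : Fin (n + 1) → MCDom n, mcVal n G h ≠ ⊥ ∧
      mcVal n G h = (G.cliqueNum : EReal)) := by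
  obtain ⟨t, ht⟩ := G.exists_isNClique_cliqueNum
  have hval := mcVal_cliqueAssignment ht.isClique
  rw [ht.card_eq] at hval
  exact ⟨mcVal_le_cliqueNum, cliqueAssignment t, hval ▸ EReal.natCast_ne_bot _, hval⟩
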